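/- With L_Li(p) = (1/C(p²-p, p-1)) · Σ_{ℓ=1}^{p-1} (ℓ/(ℓ+p-2)) · C(p²-2p+1, ℓ) · C(p-1, ℓ) and L₁(p) = (p²+p-4)/(2(p²-p)), the ratio L₁(p)/L_Li(p) tends to 1 as p → ∞. -/

import Mathlib

/-- The communication load of the Li-CDC scheme for `K = p² - p`, `r = s = p - 1`. -/
noncomputable def LLi (p : ℕ) : ℝ :=
  (∑ ℓ ∈ Finset.Icc 1 (p - 1),
      ((ℓ : ℝ) / ((ℓ : ℝ) + (p : ℝ) - 2)) *
        ((p ^ 2 - 2 * p + 1).choose ℓ : ℝ) * (((p - 1).choose ℓ : ℝ))) /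
    ((p ^ 2 - p).choose (p - 1) : ℝ)

/-- The communication load `L₁(p) = (p² + p - 4)/(2(p² - p))` of the new scheme. -/
noncomputable def L1 (p : ℕ) : ℝ :=
  ((p : ℝ) ^ 2 + (p : ℝ) - 4) / (2 * ((p : ℝ) ^ 2 - (p : ℝ)))

/-!
Put `m = p - 1`. Then `LLi p` is the mean of `ℓ / (ℓ + m - 1)` over `1 ≤ ℓ ≤ m` for the
hypergeometric weights `C(m², ℓ) C(m, ℓ)`: by Vandermonde their total mass is `C(m² + m, m)`,
and by absorption (`ℓ C(n, ℓ) = n C(n - 1, ℓ - 1)`) their mean is `m² · m / (m² + m)`.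
As `ℓ / (2m - 1) ≤ ℓ / (ℓ + m - 1) ≤ m / (2m - 1)` on that range, `LLi p` lies between
`m³ / ((2m - 1)(m² + m))` and `m / (2m - 1)`, both of which tend to `1/2`, as does `L1 p`.
-/

open Finset Filter Topology

namespace Nat

theorem sum_range_choose_mul_choose (n m : ℕ) :
    ∑ ℓ ∈ range (m + 1), n.choose ℓ * m.choose ℓ = (n + m).choose m := by
  rw [add_choose_eq, Nat.sum_antidiagonal_eq_sum_range_succ_mk]
  refine sum_congr rfl fun ℓ hℓ => ?_
  rw [choose_symm (mem_range_succ_iff.mp hℓ)]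

theorem sum_range_mul_choose_mul_choose (n m : ℕ) :
    (n + m) * ∑ ℓ ∈ range (m + 1), ℓ * (n.choose ℓ * m.choose ℓ) =
      n * m * (n + m).choose m := by
  rcases n with _ | n
  · simp only [zero_add, zero_mul, mul_eq_zero]
    refine .inr (sum_eq_zero fun ℓ _ => ?_)
    rcases ℓ with _ | ℓ <;> simp
  rcases m with _ | m
  · simp
  -- absorb `ℓ` into `(n + 1).choose ℓ`, then apply Vandermonde to the shifted sum
  have hsum : ∑ ℓ ∈ range (m + 2), ℓ * ((n + 1).choose ℓ * (m + 1).choose ℓ) =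
      (n + 1) * (n + m + 1).choose m := by
    rw [sum_range_succ', show n + m + 1 = n + (m + 1) by ring, add_choose_eq n (m + 1) m,
      Nat.sum_antidiagonal_eq_sum_range_succ_mk, mul_sum]
    simp only [zero_mul, add_zero]
    refine sum_congr rfl fun i hi => ?_
    rw [← choose_symm_of_eq_add (by have := mem_range_succ_iff.mp hi; omega :
      m + 1 = (i + 1) + (m - i)), ← mul_assoc, mul_comm (i + 1),
      ← add_one_mul_choose_eq, mul_assoc]
  rw [hsum, show n + 1 + (m + 1) = (n + m + 1) + 1 by ring, mul_left_comm,
    add_one_mul_choose_eq]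
  ring

end Nat

theorem div_two_mul_sub_one_le_div_add_sub_one {x m : ℝ} (hx : 1 ≤ x) (hxm : x ≤ m) :
    x / (2 * m - 1) ≤ x / (x + m - 1) :=
  div_le_div_of_nonneg_left (by linarith) (by linarith) (by linarith)

theorem div_add_sub_one_le_div_two_mul_sub_one {x m : ℝ} (hx : 1 ≤ x) (hxm : x ≤ m) :
    x / (x + m - 1) ≤ m / (2 * m - 1) := by
  rw [div_le_div_iff₀ (by linarith) (by linarith)]
  nlinarith

section

variable (n : ℕ) {m : ℕ}

theorem sum_div_mul_choose_mul_choose_le (hm : 0 < m) :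
    ∑ ℓ ∈ Icc 1 m, (ℓ : ℝ) / (ℓ + m - 1) * (n.choose ℓ * m.choose ℓ) ≤
      m / (2 * m - 1) * (n + m).choose m := by
  have hm' : (1 : ℝ) ≤ m := by exact_mod_cast hm
  calc ∑ ℓ ∈ Icc 1 m, (ℓ : ℝ) / (ℓ + m - 1) * (n.choose ℓ * m.choose ℓ)
      ≤ ∑ ℓ ∈ Icc 1 m, (m : ℝ) / (2 * m - 1) * (n.choose ℓ * m.choose ℓ) := by
        refine sum_le_sum fun ℓ hℓ => mul_le_mul_of_nonneg_right ?_ (by positivity)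
        obtain ⟨h1, h2⟩ := mem_Icc.mp hℓ
        exact div_add_sub_one_le_div_two_mul_sub_one (by exact_mod_cast h1)
          (by exact_mod_cast h2)
    _ ≤ ∑ ℓ ∈ range (m + 1), (m : ℝ) / (2 * m - 1) * (n.choose ℓ * m.choose ℓ) :=
        sum_le_sum_of_subset_of_nonneg
          (fun ℓ hℓ => by simp only [mem_Icc, mem_range] at hℓ ⊢; omega)
          fun _ _ _ => mul_nonneg (div_nonneg (by positivity) (by linarith)) (by positivity)
    _ = m / (2 * m - 1) * (n + m).choose m := by
        rw [← mul_sum]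
        congr 1
        exact_mod_cast Nat.sum_range_choose_mul_choose n m

theorem le_sum_div_mul_choose_mul_choose (hm : 0 < m) :
    n * m / ((2 * m - 1) * (n + m)) * (n + m).choose m ≤
      ∑ ℓ ∈ Icc 1 m, (ℓ : ℝ) / (ℓ + m - 1) * (n.choose ℓ * m.choose ℓ) := by
  have hm' : (1 : ℝ) ≤ m := by exact_mod_cast hm
  have hweighted :
      ((n : ℝ) + m) * ∑ ℓ ∈ range (m + 1), (ℓ : ℝ) * (n.choose ℓ * m.choose ℓ) =
        n * m * (n + m).choose m := by
    exact_mod_cast Nat.sum_range_mul_choose_mul_choose n m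
  calc n * m / ((2 * m - 1) * (n + m)) * (n + m).choose m
      = ∑ ℓ ∈ range (m + 1), (ℓ : ℝ) / (2 * m - 1) * (n.choose ℓ * m.choose ℓ) := by
        simp_rw [div_mul_eq_mul_div, ← sum_div, ← hweighted]
        field_simp
    _ = ∑ ℓ ∈ Icc 1 m, (ℓ : ℝ) / (2 * m - 1) * (n.choose ℓ * m.choose ℓ) := by
        refine (sum_subset (fun ℓ hℓ => ?_) fun ℓ hℓ hℓ' => ?_).symm
        · simp only [mem_Icc, mem_range] at hℓ ⊢; omega
        · obtain rfl : ℓ = 0 := by simp only [mem_Icc, mem_range] at hℓ hℓ'; omega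
          simp
    _ ≤ ∑ ℓ ∈ Icc 1 m, (ℓ : ℝ) / (ℓ + m - 1) * (n.choose ℓ * m.choose ℓ) := by
        refine sum_le_sum fun ℓ hℓ => mul_le_mul_of_nonneg_right ?_ (by positivity)
        obtain ⟨h1, h2⟩ := mem_Icc.mp hℓ
        exact div_two_mul_sub_one_le_div_add_sub_one (by exact_mod_cast h1)
          (by exact_mod_cast h2)

end

theorem ContinuousAt.tendsto_of_eventuallyEq_comp_inv {f : ℝ → ℝ} {g : ℕ → ℝ}
    (hf : ContinuousAt f 0) (hg : ∀ᶠ n : ℕ in atTop, g n = f (n : ℝ)⁻¹) :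
    Tendsto g atTop (𝓝 (f 0)) :=
  (hf.tendsto.comp (tendsto_inv_atTop_zero.comp tendsto_natCast_atTop_atTop)).congr'
    (hg.mono fun _ h => h.symm)

theorem tendsto_L1 : Tendsto L1 atTop (𝓝 (1 / 2)) := by
  convert (show ContinuousAt (fun t : ℝ => (1 + t - 4 * t ^ 2) / (2 * (1 - t))) 0 by
    fun_prop (disch := norm_num)).tendsto_of_eventuallyEq_comp_inv ?_ using 2
  · norm_num
  filter_upwards [eventually_gt_atTop 1] with p hp
  have hp' : (1 : ℝ) < p := by exact_mod_cast hp
  have : (p : ℝ) - 1 ≠ 0 := by linarith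
  unfold L1
  field_simp

section

variable {m : ℕ}

theorem LLi_succ (hm : 0 < m) : LLi (m + 1) =
    (∑ ℓ ∈ Icc 1 m, (ℓ : ℝ) / (ℓ + m - 1) * ((m ^ 2).choose ℓ * m.choose ℓ)) /
      (m ^ 2 + m).choose m := by
  have hsq : (m + 1) ^ 2 - 2 * (m + 1) + 1 = m ^ 2 := by
    zify [show 2 * (m + 1) ≤ (m + 1) ^ 2 by nlinarith]; ring
  have hK : (m + 1) ^ 2 - (m + 1) = m ^ 2 + m := by
    zify [show m + 1 ≤ (m + 1) ^ 2 by nlinarith]; ring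
  unfold LLi
  rw [hsq, hK, Nat.add_sub_cancel]
  push_cast
  congr 1
  exact sum_congr rfl fun ℓ _ => by ring

theorem LLi_succ_le (hm : 0 < m) : LLi (m + 1) ≤ m / (2 * m - 1) := by
  rw [LLi_succ hm, div_le_iff₀ (Nat.cast_pos.mpr (Nat.choose_pos (Nat.le_add_left m _)))]
  exact_mod_cast sum_div_mul_choose_mul_choose_le (m ^ 2) hm

theorem le_LLi_succ (hm : 0 < m) :
    (m : ℝ) ^ 2 * m / ((2 * m - 1) * (m ^ 2 + m)) ≤ LLi (m + 1) := by
  rw [LLi_succ hm, le_div_iff₀ (Nat.cast_pos.mpr (Nat.choose_pos (Nat.le_add_left m _)))]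
  exact_mod_cast le_sum_div_mul_choose_mul_choose (m ^ 2) hm

theorem tendsto_LLi : Tendsto LLi atTop (𝓝 (1 / 2)) := by
  rw [← tendsto_add_atTop_iff_nat 1]
  have hlower := (show ContinuousAt (fun t : ℝ => 1 / ((2 - t) * (1 + t))) 0 by
    fun_prop (disch := norm_num)).tendsto_of_eventuallyEq_comp_inv
    (g := fun m : ℕ => (m : ℝ) ^ 2 * m / ((2 * m - 1) * (m ^ 2 + m))) <| by
      filter_upwards [eventually_gt_atTop 0] with m hm
      have : (1 : ℝ) ≤ m := by exact_mod_cast hm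
      have : (2 : ℝ) * m - 1 ≠ 0 := by linarith
      field_simp
  have hupper := (show ContinuousAt (fun t : ℝ => 1 / (2 - t)) 0 by
    fun_prop (disch := norm_num)).tendsto_of_eventuallyEq_comp_inv
    (g := fun m : ℕ => (m : ℝ) / (2 * m - 1)) <| by
      filter_upwards [eventually_gt_atTop 0] with m hm
      have : (m : ℝ) ≠ 0 := by positivity
      field_simp
  norm_num at hlower hupper
  exact tendsto_of_tendsto_of_tendsto_of_le_of_le' hlower hupper
    ((eventually_gt_atTop 0).mono fun _ => le_LLi_succ)
    ((eventually_gt_atTop 0).mono fun _ => LLi_succ_le)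

end

theorem stmt_18 :
    Filter.Tendsto (fun p : ℕ => L1 p / LLi p) Filter.atTop (nhds 1) := by
  have h := tendsto_L1.div tendsto_LLi (by norm_num)
  rwa [div_self (by norm_num)] at h
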